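/- arXiv:1405.7481 — 2 statements merged into one kernel-verified Lean document; each statement's English description precedes it below -/
import Mathlib

section
/- Let Ω = {0,1}^∞ and let P be a σ-additive probability on the Borel σ-algebra whose restriction P_F to the cylinder algebra F assigns positive probability to every cylinder. Then the set of finitely additive probabilities Q on (Ω, Σ) such that Q agrees with P on every cylinder, Q satisfies the Blackwell–Dubins property, and Q is not σ-additive, has cardinality at least the continuum. -/
open Filter Topology


/-- A path in `{0,1}^∞`. -/
abbrev BinSeq := ℕ → Bool

/-- The cylinder of length `t` with base `ω`: all sequences agreeing with `ω`
in the first `t` coordinates. -/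
def cyl {X : Type*} (ω : ℕ → X) (t : ℕ) : Set (ℕ → X) := {ω' | ∀ i < t, ω' i = ω i}

/-- An algebra of subsets of `Ω`. -/
structure SetAlgebra (Ω : Type*) where
  sets : Set (Set Ω)
  univ_mem : Set.univ ∈ sets
  compl_mem : ∀ S ∈ sets, Sᶜ ∈ sets
  union_mem : ∀ S ∈ sets, ∀ T ∈ sets, S ∪ T ∈ sets

/-- The algebra is a σ-algebra: closed under countable unions. -/
def SetAlgebra.IsSigmaAlgebra {Ω : Type*} (A : SetAlgebra Ω) : Prop :=
  ∀ f : ℕ → Set Ω, (∀ n, f n ∈ A.sets) → (⋃ n, f n) ∈ A.sets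

/-- The power-set algebra. -/
def SetAlgebra.top (Ω : Type*) : SetAlgebra Ω :=
  ⟨Set.univ, trivial, fun _ _ => trivial, fun _ _ _ _ => trivial⟩

/-- A finitely additive probability on `(Ω, A)`.  The function `m` is defined on all
subsets for convenience; only its values on `A.sets` are constrained. -/
structure FA {Ω : Type*} (A : SetAlgebra Ω) where
  m : Set Ω → ℝ
  nonneg : ∀ S ∈ A.sets, 0 ≤ m S
  total : m Set.univ = 1
  add : ∀ S ∈ A.sets, ∀ T ∈ A.sets, Disjoint S T → m (S ∪ T) = m S + m T

/-- Conditional probability `P(E | C) = P(E ∩ C) / P(C)`. -/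
noncomputable def FA.cond {Ω : Type*} {A : SetAlgebra Ω} (P : FA A) (E C : Set Ω) : ℝ :=
  P.m (E ∩ C) / P.m C

/-- `Q` is absolutely continuous w.r.t. `P` (written `Q ≪ P` in the paper):
for every sequence of events, `P(Eₙ) → 0` implies `Q(Eₙ) → 0`. -/
def AbsCont {Ω : Type*} {A : SetAlgebra Ω} (P Q : FA A) : Prop :=
  ∀ E : ℕ → Set Ω, (∀ n, E n ∈ A.sets) →
    Tendsto (fun n => P.m (E n)) atTop (𝓝 0) → Tendsto (fun n => Q.m (E n)) atTop (𝓝 0)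

/-- `P` merges with `Q`: for every `ε > 0`, the `Q`-probability of the set of paths where
some event has conditional probabilities (given the first `t` coordinates) differing by
more than `ε` tends to `0` as `t → ∞`.  (`sup_E |P(E|ωᵗ) - Q(E|ωᵗ)| > ε` is expressed
equivalently as `∃ E`.) -/
def Merges {A : SetAlgebra BinSeq} (P Q : FA A) : Prop :=
  ∀ ε > 0, Tendsto
    (fun t => Q.m {ω | ∃ E ∈ A.sets, ε < |P.cond E (cyl ω t) - Q.cond E (cyl ω t)|})
    atTop (𝓝 0)

/-- Membership in the algebra `F` generated by the cylinders of `{0,1}^∞`: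
the finite unions of cylinders (the empty union giving `∅`). -/
def InCylAlg (S : Set BinSeq) : Prop :=
  ∃ (n : ℕ) (f : Fin n → BinSeq × ℕ), S = ⋃ i, cyl (f i).1 (f i).2

/-- `Q` agrees with `P` on the algebra generated by cylinders, i.e. `Q` is an
extension of `P_F` from `F` to `Σ`. -/
def ExtAgree {A : SetAlgebra BinSeq} (P Q : FA A) : Prop :=
  ∀ S, InCylAlg S → Q.m S = P.m S

/-- `P` is an extreme point of the set `E(P_F, F, Σ)` of extensions of its restriction
to the cylinder algebra: any representation of `P` as a nontrivial convex combination
of two extensions forces the two extensions to coincide (with `P`). -/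
def ExtremePoint {A : SetAlgebra BinSeq} (P : FA A) : Prop :=
  ∀ Q R : FA A, ExtAgree P Q → ExtAgree P R →
    ∀ α : ℝ, 0 < α → α < 1 →
      (∀ S ∈ A.sets, P.m S = α * Q.m S + (1 - α) * R.m S) →
      ∀ S ∈ A.sets, Q.m S = R.m S

/-- `P` is strongly nonatomic (Savagean): every event can be split in any proportion. -/
def StronglyNonatomic {Ω : Type*} {A : SetAlgebra Ω} (P : FA A) : Prop :=
  ∀ E ∈ A.sets, ∀ α : ℝ, 0 ≤ α → α ≤ 1 → ∃ F ∈ A.sets, F ⊆ E ∧ P.m F = α * P.m E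

/-- The Blackwell–Dubins property: `P` merges with every `Q ≪ P`. -/
def BDProp {A : SetAlgebra BinSeq} (P : FA A) : Prop :=
  ∀ Q : FA A, AbsCont P Q → Merges P Q

/-- `P` is countably additive (σ-additive). -/
def CountablyAdditive {Ω : Type*} {A : SetAlgebra Ω} (P : FA A) : Prop :=
  ∀ E : ℕ → Set Ω, (∀ n, E n ∈ A.sets) → (∀ n m, n ≠ m → Disjoint (E n) (E m)) →
    Tendsto (fun N => ∑ n ∈ Finset.range N, P.m (E n)) atTop (𝓝 (P.m (⋃ n, E n)))

/-!
For each `r : BinSeq` choose a countable set `D r` (`denseSet P r`) of `P`-null points meeting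
every cylinder, with `D r` and `D r'` disjoint for `r ≠ r'`: the points of `D r` spell out `r`
along a fixed infinite set of positions. Adjoining `D r` to the cylinder algebra with mass one
(Łoś–Marczewski) and extending by Zorn's lemma gives a finitely additive `Q r` on all sets that
agrees with `P` on cylinders and under which every set is approximated, up to small `Q r`-mass,
by a finite union of cylinders.

This approximability yields the Blackwell–Dubins property. For `ν ≪ Q r` the likelihood ratios
`ν(C)/P(C)` over the cylinders `C` of length `t` form a uniformly integrable martingale, hence
converge in `L¹`; so for large `t` the conditional probabilities under `Q r` and `ν` of a finite
union of cylinders differ by more than `ε` only on cylinders of small `ν`-mass. An arbitrary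
event differs from such a union by a set that is small for both measures, which by Markov's
inequality moves the conditional probabilities only on cylinders of small mass. Finally `Q r` is
not σ-additive, since the countable set `D r` of `Q r`-null points has mass one, and
`Q r' (D r) = 0` for `r' ≠ r` makes `r ↦ Q r` injective.
-/

open Set MeasureTheory

namespace SetAlgebra

variable {Ω : Type*} (A : SetAlgebra Ω) {S T : Set Ω}

theorem empty_mem : ∅ ∈ A.sets := by simpa using A.compl_mem _ A.univ_mem

theorem inter_mem (hS : S ∈ A.sets) (hT : T ∈ A.sets) : S ∩ T ∈ A.sets := by
  simpa [compl_union] using A.compl_mem _ (A.union_mem _ (A.compl_mem _ hS) _ (A.compl_mem _ hT))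

theorem diff_mem (hS : S ∈ A.sets) (hT : T ∈ A.sets) : S \ T ∈ A.sets :=
  A.inter_mem hS (A.compl_mem _ hT)

theorem symmDiff_mem (hS : S ∈ A.sets) (hT : T ∈ A.sets) : symmDiff S T ∈ A.sets :=
  A.union_mem _ (A.diff_mem hS hT) _ (A.diff_mem hT hS)

theorem biUnion_mem {ι : Type*} (s : Finset ι) {f : ι → Set Ω} (hf : ∀ i ∈ s, f i ∈ A.sets) :
    (⋃ i ∈ s, f i) ∈ A.sets := by
  classical
  induction s using Finset.induction_on with
  | empty => simpa using A.empty_mem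
  | insert i s _ ih =>
    rw [Finset.set_biUnion_insert]
    exact A.union_mem _ (hf i (by simp)) _ (ih fun j hj => hf j (by simp [hj]))

end SetAlgebra

namespace FA

variable {Ω : Type*} {A : SetAlgebra Ω} (μ : FA A) {S T : Set Ω}

theorem m_empty : μ.m ∅ = 0 := by
  have := μ.add ∅ A.empty_mem ∅ A.empty_mem (disjoint_empty _)
  rw [union_empty] at this
  linarith

theorem m_sdiff (hS : S ∈ A.sets) (hT : T ∈ A.sets) (h : T ⊆ S) :
    μ.m (S \ T) = μ.m S - μ.m T := by
  have := μ.add T hT (S \ T) (A.diff_mem hS hT) disjoint_sdiff_right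
  rw [union_sdiff_cancel h] at this
  linarith

theorem m_mono (hS : S ∈ A.sets) (hT : T ∈ A.sets) (h : S ⊆ T) : μ.m S ≤ μ.m T := by
  linarith [μ.m_sdiff hT hS h, μ.nonneg _ (A.diff_mem hT hS)]

theorem m_le_one (hS : S ∈ A.sets) : μ.m S ≤ 1 :=
  μ.total ▸ μ.m_mono hS A.univ_mem (subset_univ S)

theorem m_compl (hS : S ∈ A.sets) : μ.m Sᶜ = 1 - μ.m S := by
  rw [compl_eq_univ_sdiff, μ.m_sdiff A.univ_mem hS (subset_univ S), μ.total]

theorem m_eq_zero_of_disjoint (hS : S ∈ A.sets) (hT : T ∈ A.sets) (hST : Disjoint S T)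
    (hμT : μ.m T = 1) : μ.m S = 0 := by
  have := μ.m_mono hS (A.compl_mem _ hT) (subset_compl_iff_disjoint_right.2 hST)
  rw [μ.m_compl hT, hμT, sub_self] at this
  exact le_antisymm this (μ.nonneg S hS)

theorem m_union_le (hS : S ∈ A.sets) (hT : T ∈ A.sets) : μ.m (S ∪ T) ≤ μ.m S + μ.m T := by
  have := μ.add S hS (T \ S) (A.diff_mem hT hS) disjoint_sdiff_right
  rw [union_sdiff_self] at this
  linarith [μ.m_mono (A.diff_mem hT hS) hT sdiff_subset]

theorem m_le_add_of_subset_union {U : Set Ω} (hS : S ∈ A.sets) (hT : T ∈ A.sets)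
    (hU : U ∈ A.sets) (h : S ⊆ T ∪ U) : μ.m S ≤ μ.m T + μ.m U :=
  (μ.m_mono hS (A.union_mem _ hT _ hU) h).trans (μ.m_union_le hT hU)

theorem abs_m_sub_le_m_symmDiff (hS : S ∈ A.sets) (hT : T ∈ A.sets) :
    |μ.m S - μ.m T| ≤ μ.m (symmDiff S T) := by
  have hST := A.symmDiff_mem hS hT
  have h₁ := μ.m_le_add_of_subset_union hS hST hT (le_symmDiff_sup_right S T)
  have h₂ := μ.m_le_add_of_subset_union hT hST hS (le_symmDiff_sup_left S T)
  exact abs_sub_le_iff.2 ⟨by linarith, by linarith⟩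

theorem m_biUnion {ι : Type*} (s : Finset ι) {f : ι → Set Ω} (hf : ∀ i ∈ s, f i ∈ A.sets)
    (hd : (s : Set ι).PairwiseDisjoint f) : μ.m (⋃ i ∈ s, f i) = ∑ i ∈ s, μ.m (f i) := by
  classical
  induction s using Finset.induction_on with
  | empty => simpa using μ.m_empty
  | insert i s hi ih =>
    rw [Finset.coe_insert, pairwiseDisjoint_insert] at hd
    have hf' : ∀ j ∈ s, f j ∈ A.sets := fun j hj => hf j (by simp [hj])
    rw [Finset.set_biUnion_insert, Finset.sum_insert hi,
      μ.add _ (hf i (by simp)) _ (A.biUnion_mem s hf') ?_, ih hf' hd.1]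
    exact disjoint_iUnion₂_right.2 fun j hj => hd.2 j hj (by rintro rfl; exact hi hj)

theorem abs_cond_sub_cond_mul_le {E F C : Set Ω} (hE : E ∈ A.sets) (hF : F ∈ A.sets)
    (hC : C ∈ A.sets) : |μ.cond E C - μ.cond F C| * μ.m C ≤ μ.m (symmDiff E F ∩ C) := by
  rcases (μ.nonneg C hC).eq_or_lt with h | h
  · rw [← h, mul_zero]
    exact μ.nonneg _ (A.inter_mem (A.symmDiff_mem hE hF) hC)
  · rw [cond, cond, ← sub_div, abs_div, abs_of_pos h, div_mul_cancel₀ _ h.ne',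
      inter_symmDiff_distrib_right]
    exact μ.abs_m_sub_le_m_symmDiff (A.inter_mem hE hC) (A.inter_mem hF hC)

theorem cond_inter_self (E C : Set Ω) : μ.cond (E ∩ C) C = μ.cond E C := by
  rw [cond, cond, inter_assoc, inter_self]

end FA

theorem AbsCont.exists_pos {Ω : Type*} {A : SetAlgebra Ω} {μ ν : FA A} (h : AbsCont μ ν)
    {α : ℝ} (hα : 0 < α) : ∃ δ > 0, ∀ S ∈ A.sets, μ.m S < δ → ν.m S < α := by
  by_contra! hcon
  choose S hS hμ hν using fun n : ℕ => hcon (1 / (n + 1)) Nat.one_div_pos_of_nat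
  have hμ0 : Tendsto (fun n => μ.m (S n)) atTop (𝓝 0) :=
    squeeze_zero (fun n => μ.nonneg _ (hS n)) (fun n => (hμ n).le)
      tendsto_one_div_add_atTop_nhds_zero_nat
  obtain ⟨n, hn⟩ := ((h S hS hμ0).eventually (gt_mem_nhds hα)).exists
  exact (hν n).not_gt hn

noncomputable def MeasureTheory.Measure.toFA {Ω : Type*} [MeasurableSpace Ω] (P : Measure Ω)
    [IsProbabilityMeasure P] (A : SetAlgebra Ω) (hA : ∀ S ∈ A.sets, MeasurableSet S) : FA A where
  m S := (P S).toReal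
  nonneg _ _ := ENNReal.toReal_nonneg
  total := by simp
  add S _ T hT hST := by
    rw [measure_union hST (hA T hT), ENNReal.toReal_add (measure_ne_top P S) (measure_ne_top P T)]

theorem FA.abs_cond_sub_cond_lt {Ω : Type*} {A : SetAlgebra Ω} {μ ν : FA A} {E F C : Set Ω}
    (hE : E ∈ A.sets) (hF : F ∈ A.sets) (hC : C ∈ A.sets)
    (hμC : 0 < μ.m C) {c : ℝ} (hμ : μ.m (symmDiff E F ∩ C) < c * μ.m C)
    (hν : ν.m (symmDiff E F ∩ C) < c * ν.m C)
    (hF' : |μ.cond F C - ν.cond F C| * ν.m C < c * ν.m C) :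
    |μ.cond E C - ν.cond E C| < 3 * c := by
  have hR := A.inter_mem (A.symmDiff_mem hE hF) hC
  have hνC : 0 < ν.m C := (ν.nonneg C hC).lt_of_ne' fun h0 => by
    rw [h0, mul_zero] at hν
    linarith [ν.nonneg _ hR]
  have h₁ := lt_of_mul_lt_mul_right ((μ.abs_cond_sub_cond_mul_le hE hF hC).trans_lt hμ) hμC.le
  have h₂ := lt_of_mul_lt_mul_right ((ν.abs_cond_sub_cond_mul_le hE hF hC).trans_lt hν) hνC.le
  have h₃ := lt_of_mul_lt_mul_right hF' hνC.le
  rw [abs_lt] at h₁ h₂ h₃ ⊢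
  constructor <;> linarith

namespace FA

variable {Ω : Type*} {A B : SetAlgebra Ω}

def ApproxBy (μ : FA A) (𝒞 : Set (Set Ω)) : Prop :=
  ∀ S ∈ A.sets, ∀ ε > 0, ∃ F ∈ 𝒞, μ.m (symmDiff S F) < ε

theorem approxBy_self (μ : FA A) : μ.ApproxBy A.sets :=
  fun S hS _ hε => ⟨S, hS, by rwa [symmDiff_self, bot_eq_empty, μ.m_empty]⟩

def restrict (μ : FA B) (h : A.sets ⊆ B.sets) : FA A :=
  ⟨μ.m, fun S hS => μ.nonneg S (h hS), μ.total, fun S hS T hT => μ.add S (h hS) T (h hT)⟩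

theorem ApproxBy.restrict {μ : FA B} {𝒞 : Set (Set Ω)} (hμ : μ.ApproxBy 𝒞)
    (h : A.sets ⊆ B.sets) : (μ.restrict h).ApproxBy 𝒞 :=
  fun S hS => hμ S (h hS)

section OuterInner

variable (μ : FA A) {X Y S T C : Set Ω}

noncomputable def outerMass (X : Set Ω) : ℝ := sInf (μ.m '' {C | C ∈ A.sets ∧ X ⊆ C})

noncomputable def innerMass (X : Set Ω) : ℝ := sSup (μ.m '' {C | C ∈ A.sets ∧ C ⊆ X})

theorem outerMass_le (hC : C ∈ A.sets) (h : X ⊆ C) : μ.outerMass X ≤ μ.m C :=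
  csInf_le (⟨0, by rintro _ ⟨C, hC, rfl⟩; exact μ.nonneg C hC.1⟩ : BddBelow _) ⟨C, ⟨hC, h⟩, rfl⟩

theorem le_outerMass {b : ℝ} (h : ∀ C ∈ A.sets, X ⊆ C → b ≤ μ.m C) : b ≤ μ.outerMass X :=
  le_csInf ⟨_, univ, ⟨A.univ_mem, subset_univ X⟩, rfl⟩
    (by rintro _ ⟨C, hC, rfl⟩; exact h C hC.1 hC.2)

theorem le_innerMass (hC : C ∈ A.sets) (h : C ⊆ X) : μ.m C ≤ μ.innerMass X :=
  le_csSup (⟨1, by rintro _ ⟨C, hC, rfl⟩; exact μ.m_le_one hC.1⟩ : BddAbove _) ⟨C, ⟨hC, h⟩, rfl⟩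

theorem innerMass_le {b : ℝ} (h : ∀ C ∈ A.sets, C ⊆ X → μ.m C ≤ b) : μ.innerMass X ≤ b :=
  csSup_le ⟨_, ∅, ⟨A.empty_mem, empty_subset X⟩, rfl⟩
    (by rintro _ ⟨C, hC, rfl⟩; exact h C hC.1 hC.2)

theorem exists_superset_lt_outerMass_add {ε : ℝ} (hε : 0 < ε) :
    ∃ C ∈ A.sets, X ⊆ C ∧ μ.m C < μ.outerMass X + ε := by
  obtain ⟨_, ⟨C, hC, rfl⟩, hlt⟩ := exists_lt_of_csInf_lt (s := μ.m '' {C | C ∈ A.sets ∧ X ⊆ C})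
    ⟨_, univ, ⟨A.univ_mem, subset_univ X⟩, rfl⟩ (lt_add_of_pos_right (μ.outerMass X) hε)
  exact ⟨C, hC.1, hC.2, hlt⟩

theorem exists_subset_innerMass_sub_lt {ε : ℝ} (hε : 0 < ε) :
    ∃ C ∈ A.sets, C ⊆ X ∧ μ.innerMass X - ε < μ.m C := by
  obtain ⟨_, ⟨C, hC, rfl⟩, hlt⟩ := exists_lt_of_lt_csSup (s := μ.m '' {C | C ∈ A.sets ∧ C ⊆ X})
    ⟨_, ∅, ⟨A.empty_mem, empty_subset X⟩, rfl⟩ (sub_lt_self (μ.innerMass X) hε)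
  exact ⟨C, hC.1, hC.2, hlt⟩

theorem outerMass_empty : μ.outerMass ∅ = 0 :=
  le_antisymm (μ.m_empty ▸ μ.outerMass_le A.empty_mem subset_rfl)
    (μ.le_outerMass fun C hC _ => μ.nonneg C hC)

theorem innerMass_empty : μ.innerMass ∅ = 0 :=
  le_antisymm (μ.innerMass_le fun C _ h => by rw [subset_empty_iff.1 h, μ.m_empty])
    (μ.m_empty ▸ μ.le_innerMass A.empty_mem subset_rfl)

theorem outerMass_add_innerMass (hS : S ∈ A.sets) (E : Set Ω) :
    μ.outerMass (S ∩ E) + μ.innerMass (S ∩ Eᶜ) = μ.m S := by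
  apply le_antisymm
  · suffices μ.innerMass (S ∩ Eᶜ) ≤ μ.m S - μ.outerMass (S ∩ E) by linarith
    refine μ.innerMass_le fun C hC hCS => ?_
    have := μ.outerMass_le (A.diff_mem hS hC) fun x (hx : x ∈ S ∩ E) =>
      ⟨hx.1, fun hxC => (hCS hxC).2 hx.2⟩
    rw [μ.m_sdiff hS hC fun x hx => (hCS hx).1] at this
    linarith
  · suffices μ.m S - μ.innerMass (S ∩ Eᶜ) ≤ μ.outerMass (S ∩ E) by linarith
    refine μ.le_outerMass fun C hC hSC => ?_
    have h₁ := μ.le_innerMass (X := S ∩ Eᶜ) (A.diff_mem hS hC) fun x (hx : x ∈ S \ C) =>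
      ⟨hx.1, fun hxE => hx.2 (hSC ⟨hx.1, hxE⟩)⟩
    have h₂ := μ.m_le_add_of_subset_union hS hC (A.diff_mem hS hC) fun x hx => by
      by_cases hxC : x ∈ C
      · exact Or.inl hxC
      · exact Or.inr ⟨hx, hxC⟩
    linarith

theorem outerMass_union {K L : Set Ω} (hK : K ∈ A.sets) (hL : L ∈ A.sets) (hKL : Disjoint K L)
    (hX : X ⊆ K) (hY : Y ⊆ L) : μ.outerMass (X ∪ Y) = μ.outerMass X + μ.outerMass Y := by
  apply le_antisymm
  · refine le_of_forall_pos_le_add fun ε hε => ?_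
    obtain ⟨G, hG, hXG, hGlt⟩ := μ.exists_superset_lt_outerMass_add (X := X) (half_pos hε)
    obtain ⟨H, hH, hYH, hHlt⟩ := μ.exists_superset_lt_outerMass_add (X := Y) (half_pos hε)
    have := μ.outerMass_le (A.union_mem _ hG _ hH) (union_subset_union hXG hYH)
    linarith [μ.m_union_le hG hH]
  · refine μ.le_outerMass fun G hG hXYG => ?_
    have hGK := A.inter_mem hG hK
    have hGL := A.inter_mem hG hL
    have := μ.add _ hGK _ hGL (hKL.mono inter_subset_right inter_subset_right)
    linarith [μ.outerMass_le hGK (subset_inter (subset_union_left.trans hXYG) hX),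
      μ.outerMass_le hGL (subset_inter (subset_union_right.trans hXYG) hY),
      μ.m_mono (A.union_mem _ hGK _ hGL) hG (union_subset inter_subset_left inter_subset_left)]

theorem innerMass_union {K L : Set Ω} (hK : K ∈ A.sets) (hL : L ∈ A.sets) (hKL : Disjoint K L)
    (hX : X ⊆ K) (hY : Y ⊆ L) : μ.innerMass (X ∪ Y) = μ.innerMass X + μ.innerMass Y := by
  apply le_antisymm
  · refine μ.innerMass_le fun G hG hGXY => ?_
    have hGK := A.inter_mem hG hK
    have hGL := A.inter_mem hG hL
    have hGKX : G ∩ K ⊆ X := fun x hx => (hGXY hx.1).resolve_right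
      fun hxY => hKL.le_bot ⟨hx.2, hY hxY⟩
    have hGLY : G ∩ L ⊆ Y := fun x hx => (hGXY hx.1).resolve_left
      fun hxX => hKL.le_bot ⟨hX hxX, hx.2⟩
    have hcover : G ⊆ G ∩ K ∪ G ∩ L := fun x hx =>
      (hGXY hx).imp (fun h => ⟨hx, hX h⟩) (fun h => ⟨hx, hY h⟩)
    linarith [μ.m_le_add_of_subset_union hG hGK hGL hcover, μ.le_innerMass hGK hGKX,
      μ.le_innerMass hGL hGLY]
  · refine le_of_forall_pos_le_add fun ε hε => ?_
    obtain ⟨G, hG, hGX, hGlt⟩ := μ.exists_subset_innerMass_sub_lt (X := X) (half_pos hε)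
    obtain ⟨H, hH, hHY, hHlt⟩ := μ.exists_subset_innerMass_sub_lt (X := Y) (half_pos hε)
    have := μ.add _ hG _ hH (hKL.mono (hGX.trans hX) (hHY.trans hY))
    linarith [μ.le_innerMass (A.union_mem _ hG _ hH) (union_subset_union hGX hHY)]

theorem outerMass_eq_one {D : Set Ω} (hD : ∀ S ∈ A.sets, S.Nonempty → (S ∩ D).Nonempty) :
    μ.outerMass D = 1 := by
  refine le_antisymm (μ.total ▸ μ.outerMass_le A.univ_mem (subset_univ D))
    (μ.le_outerMass fun C hC hDC => ?_)
  have : Cᶜ = ∅ := not_nonempty_iff_eq_empty.1 fun hne => by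
    obtain ⟨x, hxC, hxD⟩ := hD _ (A.compl_mem _ hC) hne
    exact hxC (hDC hxD)
  rw [← compl_compl C, this, compl_empty, μ.total]

end OuterInner

end FA

/-! ### The Łoś–Marczewski extension -/

theorem Set.inter_subset_sdiff_of_disjoint {α : Type*} {E S T K L : Set α}
    (hSK : S ∩ E = K ∩ E) (hTL : T ∩ E = L ∩ E) (hST : Disjoint S T) : S ∩ E ⊆ K \ L :=
  fun x hx =>
    ⟨(hSK ▸ hx).1, fun hxL => hST.le_bot ⟨hx.1, (hTL.symm ▸ ⟨hxL, hx.2⟩ : x ∈ T ∩ E).1⟩⟩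

namespace SetAlgebra

variable {Ω : Type*} (A : SetAlgebra Ω) {E S T : Set Ω}

def TracesOn (E S : Set Ω) : Prop := ∃ K ∈ A.sets, S ∩ E = K ∩ E

variable {A}

theorem tracesOn_of_mem (hS : S ∈ A.sets) : A.TracesOn E S := ⟨S, hS, rfl⟩

theorem TracesOn.compl (h : A.TracesOn E S) : A.TracesOn E Sᶜ := by
  obtain ⟨K, hK, hSK⟩ := h
  refine ⟨Kᶜ, A.compl_mem _ hK, ?_⟩
  simp only [Set.ext_iff, mem_inter_iff, mem_compl_iff] at hSK ⊢
  exact fun x => by have := hSK x; tauto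

theorem TracesOn.union (hS : A.TracesOn E S) (hT : A.TracesOn E T) : A.TracesOn E (S ∪ T) := by
  obtain ⟨K, hK, hSK⟩ := hS
  obtain ⟨L, hL, hTL⟩ := hT
  exact ⟨K ∪ L, A.union_mem _ hK _ hL, by rw [union_inter_distrib_right, hSK, hTL,
    union_inter_distrib_right]⟩

variable (A) in
def adjoin (E : Set Ω) : SetAlgebra Ω where
  sets := {S | A.TracesOn E S ∧ A.TracesOn Eᶜ S}
  univ_mem := ⟨tracesOn_of_mem A.univ_mem, tracesOn_of_mem A.univ_mem⟩
  compl_mem _ h := ⟨h.1.compl, h.2.compl⟩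
  union_mem _ hS _ hT := ⟨hS.1.union hT.1, hS.2.union hT.2⟩

theorem mem_adjoin_of_mem (hS : S ∈ A.sets) : S ∈ (A.adjoin E).sets :=
  ⟨tracesOn_of_mem hS, tracesOn_of_mem hS⟩

theorem mem_adjoin_self : E ∈ (A.adjoin E).sets :=
  ⟨⟨univ, A.univ_mem, by simp⟩, ⟨∅, A.empty_mem, by simp⟩⟩

end SetAlgebra

namespace FA

variable {Ω : Type*} {A : SetAlgebra Ω} (μ : FA A) {E S T : Set Ω}

theorem outerMass_inter_union (hS : A.TracesOn E S) (hT : A.TracesOn E T) (hST : Disjoint S T) :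
    μ.outerMass ((S ∪ T) ∩ E) = μ.outerMass (S ∩ E) + μ.outerMass (T ∩ E) := by
  obtain ⟨K, hK, hSK⟩ := hS
  obtain ⟨L, hL, hTL⟩ := hT
  rw [union_inter_distrib_right]
  exact μ.outerMass_union (A.diff_mem hK hL) hL disjoint_sdiff_left
    (inter_subset_sdiff_of_disjoint hSK hTL hST) (hTL ▸ inter_subset_left)

theorem innerMass_inter_union (hS : A.TracesOn E S) (hT : A.TracesOn E T) (hST : Disjoint S T) :
    μ.innerMass ((S ∪ T) ∩ E) = μ.innerMass (S ∩ E) + μ.innerMass (T ∩ E) := by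
  obtain ⟨K, hK, hSK⟩ := hS
  obtain ⟨L, hL, hTL⟩ := hT
  rw [union_inter_distrib_right]
  exact μ.innerMass_union (A.diff_mem hK hL) hL disjoint_sdiff_left
    (inter_subset_sdiff_of_disjoint hSK hTL hST) (hTL ▸ inter_subset_left)

/-- The Łoś–Marczewski extension. -/
noncomputable def adjoin (E : Set Ω) : FA (A.adjoin E) where
  m S := μ.outerMass (S ∩ E) + μ.innerMass (S ∩ Eᶜ)
  nonneg _ _ := add_nonneg (μ.le_outerMass fun C hC _ => μ.nonneg C hC)
    (μ.m_empty ▸ μ.le_innerMass A.empty_mem (empty_subset _))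
  total := (μ.outerMass_add_innerMass A.univ_mem E).trans μ.total
  add S hS T hT hST := by
    rw [μ.outerMass_inter_union hS.1 hT.1 hST, μ.innerMass_inter_union hS.2 hT.2 hST]
    ring

theorem adjoin_m_of_mem (hS : S ∈ A.sets) : (μ.adjoin E).m S = μ.m S :=
  μ.outerMass_add_innerMass hS E

theorem adjoin_m_of_subset (h : S ⊆ E) : (μ.adjoin E).m S = μ.outerMass S := by
  simp only [adjoin]
  rw [inter_eq_left.2 h, (disjoint_compl_right.mono_left h).inter_eq, innerMass_empty, add_zero]

theorem adjoin_m_of_subset_compl (h : S ⊆ Eᶜ) : (μ.adjoin E).m S = μ.innerMass S := by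
  simp only [adjoin]
  rw [inter_eq_left.2 h, (subset_compl_iff_disjoint_right.1 h).inter_eq, outerMass_empty, zero_add]

/-- Approximate `S ∩ E` from outside and `S ∩ Eᶜ` from inside by members of `A`, then
approximate the union of the two by a member of `𝒞`. -/
theorem ApproxBy.adjoin {μ : FA A} {𝒞 : Set (Set Ω)} (hμ : μ.ApproxBy 𝒞) (h𝒞 : 𝒞 ⊆ A.sets)
    (E : Set Ω) : (μ.adjoin E).ApproxBy 𝒞 := by
  intro S hS ε hε
  have hε3 : 0 < ε / 3 := by positivity
  obtain ⟨G, hG, hSG, hGlt⟩ := μ.exists_superset_lt_outerMass_add (X := S ∩ E) hε3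
  obtain ⟨H, hH, hHS, hHlt⟩ := μ.exists_subset_innerMass_sub_lt (X := S ∩ Eᶜ) hε3
  have hGH := A.union_mem _ hG _ hH
  obtain ⟨F, hF, hGHF⟩ := hμ _ hGH _ hε3
  refine ⟨F, hF, ?_⟩
  set A' := A.adjoin E
  have mem {X : Set Ω} (hX : X ∈ A.sets) : X ∈ A'.sets := SetAlgebra.mem_adjoin_of_mem hX
  have hSE : S ∩ E ∈ A'.sets := A'.inter_mem hS SetAlgebra.mem_adjoin_self
  have hSEc : S ∩ Eᶜ ∈ A'.sets := A'.inter_mem hS (A'.compl_mem _ SetAlgebra.mem_adjoin_self)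
  have h₁ : (μ.adjoin E).m (G \ (S ∩ E)) < ε / 3 := by
    rw [m_sdiff _ (mem hG) hSE hSG, adjoin_m_of_mem _ hG, adjoin_m_of_subset _ inter_subset_right]
    linarith
  have h₂ : (μ.adjoin E).m ((S ∩ Eᶜ) \ H) < ε / 3 := by
    rw [m_sdiff _ hSEc (mem hH) hHS, adjoin_m_of_mem _ hH,
      adjoin_m_of_subset_compl _ inter_subset_right]
    linarith
  have h₃ : (μ.adjoin E).m (symmDiff (G ∪ H) F) < ε / 3 := by
    rwa [adjoin_m_of_mem _ (A.symmDiff_mem hGH (h𝒞 hF))]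
  have hcover : symmDiff S F ⊆ (G \ (S ∩ E) ∪ (S ∩ Eᶜ) \ H) ∪ symmDiff (G ∪ H) F := by
    intro x hx
    have := @hSG x
    have := @hHS x
    simp only [mem_symmDiff, mem_union, Set.mem_sdiff, mem_inter_iff, mem_compl_iff] at *
    tauto
  have h₁₂ := (μ.adjoin E).m_union_le (A'.diff_mem (mem hG) hSE) (A'.diff_mem hSEc (mem hH))
  have := (μ.adjoin E).m_le_add_of_subset_union (A'.symmDiff_mem hS (mem (h𝒞 hF)))
    (A'.union_mem _ (A'.diff_mem (mem hG) hSE) _ (A'.diff_mem hSEc (mem hH)))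
    (mem (A.symmDiff_mem hGH (h𝒞 hF))) hcover
  linarith

end FA

/-! ### Extension to all sets -/

structure PartialFA (Ω : Type*) where
  alg : SetAlgebra Ω
  μ : FA alg

namespace PartialFA

variable {Ω : Type*}

instance : Preorder (PartialFA Ω) where
  le p q := p.alg.sets ⊆ q.alg.sets ∧ ∀ S ∈ p.alg.sets, q.μ.m S = p.μ.m S
  le_refl _ := ⟨subset_rfl, fun _ _ => rfl⟩
  le_trans _ _ _ hpq hqr := ⟨hpq.1.trans hqr.1, fun S hS => (hqr.2 S (hpq.1 hS)).trans (hpq.2 S hS)⟩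

variable {c : Set (PartialFA Ω)}

theorem exists_mem_sets_of_isChain (hc : IsChain (· ≤ ·) c) {p q : PartialFA Ω}
    (hp : p ∈ c) (hq : q ∈ c) {S T : Set Ω} (hS : S ∈ p.alg.sets) (hT : T ∈ q.alg.sets) :
    ∃ r ∈ c, S ∈ r.alg.sets ∧ T ∈ r.alg.sets := by
  rcases hc.total hp hq with h | h
  · exact ⟨q, hq, h.1 hS, hT⟩
  · exact ⟨p, hp, hS, h.1 hT⟩

noncomputable def chainMass (c : Set (PartialFA Ω)) (S : Set Ω) : ℝ :=
  open Classical in if h : ∃ p ∈ c, S ∈ p.alg.sets then h.choose.μ.m S else 0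

theorem chainMass_eq (hc : IsChain (· ≤ ·) c) {p : PartialFA Ω} (hp : p ∈ c) {S : Set Ω}
    (hS : S ∈ p.alg.sets) : chainMass c S = p.μ.m S := by
  have h : ∃ p ∈ c, S ∈ p.alg.sets := ⟨p, hp, hS⟩
  rw [chainMass, dif_pos h]
  rcases hc.total h.choose_spec.1 hp with hle | hle
  · exact (hle.2 S h.choose_spec.2).symm
  · exact hle.2 S hS

noncomputable def chainSup (hc : IsChain (· ≤ ·) c) (hne : c.Nonempty) : PartialFA Ω where
  alg :=
    { sets := {S | ∃ p ∈ c, S ∈ p.alg.sets}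
      univ_mem := ⟨hne.some, hne.some_mem, hne.some.alg.univ_mem⟩
      compl_mem := fun _ ⟨p, hp, h⟩ => ⟨p, hp, p.alg.compl_mem _ h⟩
      union_mem := fun _ ⟨_, hp, hS⟩ _ ⟨_, hq, hT⟩ => by
        obtain ⟨r, hr, hSr, hTr⟩ := exists_mem_sets_of_isChain hc hp hq hS hT
        exact ⟨r, hr, r.alg.union_mem _ hSr _ hTr⟩ }
  μ :=
    { m := chainMass c
      nonneg := fun S ⟨p, hp, hS⟩ => (chainMass_eq hc hp hS).symm ▸ p.μ.nonneg S hS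
      total := (chainMass_eq hc hne.some_mem hne.some.alg.univ_mem).trans hne.some.μ.total
      add := fun S ⟨_, hp, hS⟩ T ⟨_, hq, hT⟩ hST => by
        obtain ⟨r, hr, hSr, hTr⟩ := exists_mem_sets_of_isChain hc hp hq hS hT
        rw [chainMass_eq hc hr (r.alg.union_mem _ hSr _ hTr), chainMass_eq hc hr hSr,
          chainMass_eq hc hr hTr, r.μ.add S hSr T hTr hST] }

theorem le_chainSup (hc : IsChain (· ≤ ·) c) (hne : c.Nonempty) {p : PartialFA Ω} (hp : p ∈ c) :
    p ≤ chainSup hc hne :=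
  ⟨fun _ hS => ⟨p, hp, hS⟩, fun _ hS => chainMass_eq hc hp hS⟩

theorem approxBy_chainSup (hc : IsChain (· ≤ ·) c) (hne : c.Nonempty) {𝒞 : Set (Set Ω)}
    (h𝒞 : ∀ p ∈ c, p.μ.ApproxBy 𝒞 ∧ 𝒞 ⊆ p.alg.sets) : (chainSup hc hne).μ.ApproxBy 𝒞 := by
  rintro S ⟨p, hp, hS⟩ ε hε
  obtain ⟨F, hF, hSF⟩ := (h𝒞 p hp).1 S hS ε hε
  refine ⟨F, hF, ?_⟩
  rwa [← (le_chainSup hc hne hp).2 _ (p.alg.symmDiff_mem hS ((h𝒞 p hp).2 hF))] at hSF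

end PartialFA

/-- A maximal approximable extension is defined on all sets: otherwise its Łoś–Marczewski
extension would be a strictly larger one. -/
theorem FA.exists_extension_approxBy {Ω : Type*} {A₀ : SetAlgebra Ω} (μ₀ : FA A₀)
    {𝒞 : Set (Set Ω)} (hμ₀ : μ₀.ApproxBy 𝒞) (h𝒞 : 𝒞 ⊆ A₀.sets) :
    ∃ μ : FA (SetAlgebra.top Ω), (∀ S ∈ A₀.sets, μ.m S = μ₀.m S) ∧ μ.ApproxBy 𝒞 := by
  obtain ⟨p, hp₀, hp, hmax⟩ := zorn_le_nonempty₀ {p : PartialFA Ω | p.μ.ApproxBy 𝒞 ∧ 𝒞 ⊆ p.alg.sets}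
    (fun c hcs hc q hq => ⟨_, ⟨PartialFA.approxBy_chainSup hc ⟨q, hq⟩ hcs,
      fun F hF => ⟨q, hq, (hcs hq).2 hF⟩⟩, fun _ => PartialFA.le_chainSup hc ⟨q, hq⟩⟩)
    ⟨A₀, μ₀⟩ ⟨hμ₀, h𝒞⟩
  have htop : (SetAlgebra.top Ω).sets ⊆ p.alg.sets := fun E _ => by
    have hle : p ≤ ⟨p.alg.adjoin E, p.μ.adjoin E⟩ :=
      ⟨fun _ => SetAlgebra.mem_adjoin_of_mem, fun _ => p.μ.adjoin_m_of_mem⟩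
    exact (hmax ⟨hp.1.adjoin hp.2 E, hp.2.trans fun _ => SetAlgebra.mem_adjoin_of_mem⟩ hle).1
      SetAlgebra.mem_adjoin_self
  exact ⟨p.μ.restrict htop, hp₀.2, hp.1.restrict htop⟩

theorem FA.exists_extension_mass_one {Ω : Type*} {A : SetAlgebra Ω} (μ : FA A) {D : Set Ω}
    (hD : ∀ S ∈ A.sets, S.Nonempty → (S ∩ D).Nonempty) :
    ∃ ν : FA (SetAlgebra.top Ω), (∀ S ∈ A.sets, ν.m S = μ.m S) ∧ ν.m D = 1 ∧
      ν.ApproxBy A.sets := by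
  obtain ⟨ν, hν, happrox⟩ := (μ.adjoin D).exists_extension_approxBy
    (μ.approxBy_self.adjoin subset_rfl D) fun _ => SetAlgebra.mem_adjoin_of_mem
  refine ⟨ν, fun S hS => ?_, ?_, happrox⟩
  · rw [hν S (SetAlgebra.mem_adjoin_of_mem hS), μ.adjoin_m_of_mem hS]
  · rw [hν D SetAlgebra.mem_adjoin_self, μ.adjoin_m_of_subset subset_rfl,
      μ.outerMass_eq_one hD]

/-! ### Cylinders -/

namespace BinSeq

abbrev Word (t : ℕ) := Fin t → Bool

def take (t : ℕ) (ω : BinSeq) : Word t := fun i => ω i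

def Word.trunc {t s : ℕ} (h : t ≤ s) (w : Word s) : Word t := fun i => w (Fin.castLE h i)

def fiber {t s : ℕ} (h : t ≤ s) (v : Word t) : Finset (Word s) :=
  Finset.univ.filter fun w => Word.trunc h w = v

def cylOf {t : ℕ} (v : Word t) : Set BinSeq := take t ⁻¹' {v}

def cylUnion {t : ℕ} (W : Finset (Word t)) : Set BinSeq := take t ⁻¹' W

variable {t s : ℕ}

@[simp] theorem Word.trunc_take (h : t ≤ s) (ω : BinSeq) :
    Word.trunc h (take s ω) = take t ω := rfl

theorem take_surjective (t : ℕ) : Function.Surjective (take t) :=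
  fun v => ⟨fun n => if h : n < t then v ⟨n, h⟩ else false, funext fun i => dif_pos i.isLt⟩

@[simp] theorem mem_cylOf {v : Word t} {ω : BinSeq} : ω ∈ cylOf v ↔ take t ω = v := Iff.rfl

@[simp] theorem mem_cylUnion {W : Finset (Word t)} {ω : BinSeq} :
    ω ∈ cylUnion W ↔ take t ω ∈ W := Iff.rfl

@[simp] theorem mem_fiber {h : t ≤ s} {v : Word t} {w : Word s} :
    w ∈ fiber h v ↔ Word.trunc h w = v := by simp [fiber]

theorem cyl_eq_cylOf (ω : BinSeq) (t : ℕ) : cyl ω t = cylOf (take t ω) := by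
  ext ω'
  simp only [cyl, mem_ofPred_eq, mem_cylOf, funext_iff, take, Fin.forall_iff]

theorem cylUnion_eq_biUnion (W : Finset (Word t)) : cylUnion W = ⋃ v ∈ W, cylOf v := by
  ext; simp

theorem pairwiseDisjoint_cylOf (s : Set (Word t)) : s.PairwiseDisjoint cylOf :=
  fun _ _ _ _ h => disjoint_left.2 fun _ h₁ h₂ => h (h₁.symm.trans h₂)

theorem cylOf_eq_cylUnion_fiber (h : t ≤ s) (v : Word t) : cylOf v = cylUnion (fiber h v) := by
  ext; simp

theorem cylUnion_eq_cylUnion_preimage (h : t ≤ s) (W : Finset (Word t)) :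
    cylUnion W = cylUnion (Finset.univ.filter fun w : Word s => Word.trunc h w ∈ W) := by
  ext; simp

theorem cylUnion_inter_cylOf (h : t ≤ s) (W : Finset (Word s)) (v : Word t) :
    cylUnion W ∩ cylOf v = cylUnion (fiber h v ∩ W) := by
  ext; simp [and_comm]

theorem measurableSet_cylOf (v : Word t) : MeasurableSet (cylOf v) :=
  (measurableSet_singleton v).preimage (measurable_pi_lambda _ fun _ => measurable_pi_apply _)

theorem cylUnion_union (W W' : Finset (Word t)) :
    cylUnion (W ∪ W') = cylUnion W ∪ cylUnion W' := by
  ext; simp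

def cylAlgebra : SetAlgebra BinSeq where
  sets := {S | ∃ (t : ℕ) (W : Finset (Word t)), S = cylUnion W}
  univ_mem := ⟨0, Finset.univ, by rw [cylUnion, Finset.coe_univ, preimage_univ]⟩
  compl_mem := by
    rintro _ ⟨t, W, rfl⟩
    exact ⟨t, Wᶜ, by ext; simp⟩
  union_mem := by
    rintro _ ⟨t, W, rfl⟩ _ ⟨s, W', rfl⟩
    rw [cylUnion_eq_cylUnion_preimage (le_max_left t s) W,
      cylUnion_eq_cylUnion_preimage (le_max_right t s) W', ← cylUnion_union]
    exact ⟨_, _, rfl⟩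

theorem cylOf_mem_cylAlgebra (v : Word t) : cylOf v ∈ cylAlgebra.sets :=
  ⟨t, {v}, by ext; simp⟩

theorem cylUnion_mem_cylAlgebra (W : Finset (Word t)) : cylUnion W ∈ cylAlgebra.sets :=
  ⟨t, W, rfl⟩

theorem measurableSet_of_mem_cylAlgebra {S : Set BinSeq} (hS : S ∈ cylAlgebra.sets) :
    MeasurableSet S := by
  obtain ⟨t, W, rfl⟩ := hS
  rw [cylUnion_eq_biUnion]
  exact Finset.measurableSet_biUnion W fun v _ => measurableSet_cylOf v

theorem exists_le_cylUnion_eq {S : Set BinSeq} (hS : S ∈ cylAlgebra.sets) (t : ℕ) :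
    ∃ s, t ≤ s ∧ ∃ W : Finset (Word s), S = cylUnion W := by
  obtain ⟨u, W, rfl⟩ := hS
  exact ⟨max u t, le_max_right u t, _, cylUnion_eq_cylUnion_preimage (le_max_left u t) W⟩

theorem antitone_cylOf_take (x : BinSeq) : Antitone fun t => cylOf (take t x) :=
  fun _ _ hst _ hω => funext fun i => congrFun hω (Fin.castLE hst i)

theorem iInter_cylOf_take (x : BinSeq) : ⋂ t, cylOf (take t x) = {x} := by
  refine Subset.antisymm (fun ω hω => funext fun n => ?_) fun ω hω => by
    simp [mem_singleton_iff.1 hω]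
  exact congrFun (mem_iInter.1 hω (n + 1)) (Fin.last n)

theorem sum_eq_sum_fiber {M : Type*} [AddCommMonoid M] (h : t ≤ s) (F : Word t → Word s → M) :
    ∑ w, F (Word.trunc h w) w = ∑ v, ∑ w ∈ fiber h v, F v w := by
  rw [← Finset.sum_fiberwise Finset.univ (Word.trunc h)]
  exact Finset.sum_congr rfl fun v _ => Finset.sum_congr rfl fun w hw => by
    rw [(Finset.mem_filter.1 hw).2]

end BinSeq

open BinSeq

/-! ### Likelihood ratios and merging -/

theorem abs_sub_le_abs_min_sub_min_add (a b l : ℝ) :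
    |a - b| ≤ |min a l - min b l| + max (a - l) 0 + max (b - l) 0 := by
  rcases le_total a l with h1 | h1 <;> rcases le_total b l with h2 | h2 <;>
    simp only [min_eq_left, min_eq_right, max_eq_left, max_eq_right, sub_nonneg, sub_nonpos,
      h1, h2] <;>
    refine abs_sub_le_iff.2 ⟨?_, ?_⟩ <;>
    linarith [le_abs_self (a - b), le_abs_self (a - l), le_abs_self (l - b), neg_abs_le (a - b),
      neg_abs_le (a - l), neg_abs_le (l - b), abs_nonneg (l - l)]

theorem Finset.mul_sum_filter_le_sum {ι : Type*} (s : Finset ι) (w φ : ι → ℝ) (c : ℝ)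
    (hφ : ∀ i ∈ s, 0 ≤ φ i) : c * ∑ i ∈ s with c * w i ≤ φ i, w i ≤ ∑ i ∈ s, φ i := by
  rw [Finset.mul_sum]
  exact (Finset.sum_le_sum fun i hi => (Finset.mem_filter.1 hi).2).trans
    (Finset.sum_le_sum_of_subset_of_nonneg (Finset.filter_subset _ _) fun i hi _ => hφ i hi)

namespace FA

variable {A : SetAlgebra BinSeq} {t s : ℕ}

section Cylinders

variable (μ : FA A) (hA : cylAlgebra.sets ⊆ A.sets)

include hA in
theorem m_cylUnion (W : Finset (Word t)) : μ.m (cylUnion W) = ∑ v ∈ W, μ.m (cylOf v) := by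
  rw [cylUnion_eq_biUnion]
  exact μ.m_biUnion W (fun v _ => hA (cylOf_mem_cylAlgebra v)) (pairwiseDisjoint_cylOf _)

include hA in
theorem sum_m_cylOf (t : ℕ) : ∑ v : Word t, μ.m (cylOf v) = 1 := by
  rw [← μ.m_cylUnion hA, ← μ.total, cylUnion, Finset.coe_univ, preimage_univ]

include hA in
theorem m_cylOf_eq_sum_fiber (h : t ≤ s) (v : Word t) :
    μ.m (cylOf v) = ∑ w ∈ fiber h v, μ.m (cylOf w) := by
  rw [cylOf_eq_cylUnion_fiber h, μ.m_cylUnion hA]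

include hA in
theorem sum_m_inter_cylOf {R : Set BinSeq} (hR : R ∈ A.sets) (t : ℕ) :
    ∑ v : Word t, μ.m (R ∩ cylOf v) = μ.m R := by
  rw [← μ.m_biUnion Finset.univ (fun v _ => A.inter_mem hR (hA (cylOf_mem_cylAlgebra v)))
    ((pairwiseDisjoint_cylOf _).mono fun v => inter_subset_right)]
  congr 1
  ext
  simp

include hA in
theorem mul_m_cylUnion_filter_le {R : Set BinSeq} (hR : R ∈ A.sets) (c : ℝ) :
    c * μ.m (cylUnion (Finset.univ.filter fun v : Word t =>
      c * μ.m (cylOf v) ≤ μ.m (R ∩ cylOf v))) ≤ μ.m R := by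
  rw [μ.m_cylUnion hA, ← μ.sum_m_inter_cylOf hA hR t]
  exact Finset.mul_sum_filter_le_sum _ _ _ c fun v _ =>
    μ.nonneg _ (A.inter_mem hR (hA (cylOf_mem_cylAlgebra v)))

include hA in
theorem m_singleton_eq_zero {P : Measure BinSeq} [IsFiniteMeasure P]
    (hμP : ∀ S ∈ cylAlgebra.sets, μ.m S = (P S).toReal) {x : BinSeq} (hxA : {x} ∈ A.sets)
    (hx : P {x} = 0) : μ.m {x} = 0 := by
  have hle (t : ℕ) : μ.m {x} ≤ (P (cylOf (take t x))).toReal :=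
    hμP _ (cylOf_mem_cylAlgebra _) ▸
      μ.m_mono hxA (hA (cylOf_mem_cylAlgebra _)) (singleton_subset_iff.2 rfl)
  have hlim := tendsto_measure_iInter_atTop (μ := P)
    (fun t => (measurableSet_cylOf (take t x)).nullMeasurableSet) (antitone_cylOf_take x)
    ⟨0, measure_ne_top P _⟩
  rw [iInter_cylOf_take, hx] at hlim
  exact le_antisymm (ge_of_tendsto' ((ENNReal.tendsto_toReal ENNReal.zero_ne_top).comp hlim) hle)
    (μ.nonneg _ hxA)

noncomputable def expect (k : Word t → ℝ) : ℝ := ∑ v, μ.m (cylOf v) * k v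

include hA in
theorem expect_mono {k k' : Word t → ℝ} (hk : ∀ v, k v ≤ k' v) : μ.expect k ≤ μ.expect k' :=
  Finset.sum_le_sum fun v _ =>
    mul_le_mul_of_nonneg_left (hk v) (μ.nonneg _ (hA (cylOf_mem_cylAlgebra v)))

include hA in
theorem expect_comp_trunc (h : t ≤ s) (k : Word t → ℝ) :
    μ.expect (fun w : Word s => k (Word.trunc h w)) = μ.expect k := by
  simp only [expect, sum_eq_sum_fiber h fun v w => μ.m (cylOf w) * k v, ← Finset.sum_mul,
    ← μ.m_cylOf_eq_sum_fiber hA h]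

include hA in
theorem sq_expect_abs_le (d : Word t → ℝ) :
    μ.expect (fun v => |d v|) ^ 2 ≤ μ.expect (fun v => d v ^ 2) := by
  have hμ₀ (v : Word t) := μ.nonneg _ (hA (cylOf_mem_cylAlgebra v))
  have := Finset.sum_sq_le_sum_mul_sum_of_sq_le_mul Finset.univ (fun v _ => hμ₀ v)
    (fun v _ => mul_nonneg (hμ₀ v) (sq_nonneg (d v)))
    (r := fun v => μ.m (cylOf v) * |d v|) fun v _ => by rw [mul_pow, sq_abs]; exact le_of_eq (by ring)
  rwa [μ.sum_m_cylOf hA, one_mul] at this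

noncomputable def ratio (ν : FA A) (v : Word t) : ℝ := ν.m (cylOf v) / μ.m (cylOf v)

noncomputable def tail (ν : FA A) (l : ℝ) (t : ℕ) : ℝ :=
  μ.expect fun v : Word t => max (μ.ratio ν v - l) 0

/-- This increases with `t`, since the ratios truncated at `l` form a supermartingale bounded
by `l`; its increments control the `L²` increments of the truncated ratios. -/
noncomputable def truncPotential (ν : FA A) (l : ℝ) (t : ℕ) : ℝ :=
  μ.expect fun v : Word t => min (μ.ratio ν v) l ^ 2 - 2 * l * min (μ.ratio ν v) l

end Cylinders

section LikelihoodRatio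

variable {μ : FA A} (ν : FA A) (hA : cylAlgebra.sets ⊆ A.sets)
  (hμ : ∀ t (v : Word t), 0 < μ.m (cylOf v))

include hμ in
theorem mul_ratio (v : Word t) : μ.m (cylOf v) * μ.ratio ν v = ν.m (cylOf v) :=
  mul_div_cancel₀ _ (hμ t v).ne'

include hA hμ in
theorem sum_fiber_mul_min_ratio_le (h : t ≤ s) (l : ℝ) (v : Word t) :
    ∑ w ∈ fiber h v, μ.m (cylOf w) * min (μ.ratio ν w) l ≤ μ.m (cylOf v) * min (μ.ratio ν v) l := by
  have hmin {t} (u : Word t) : μ.m (cylOf u) * min (μ.ratio ν u) l =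
      min (ν.m (cylOf u)) (l * μ.m (cylOf u)) := by
    rw [mul_min_of_nonneg _ _ (hμ t u).le, mul_ratio ν hμ, mul_comm]
  simp only [hmin]
  rw [ν.m_cylOf_eq_sum_fiber hA h, μ.m_cylOf_eq_sum_fiber hA h, Finset.mul_sum]
  exact le_min (Finset.sum_le_sum fun _ _ => min_le_left _ _)
    (Finset.sum_le_sum fun _ _ => min_le_right _ _)

include hA hμ in
theorem expect_sq_sub_le {l : ℝ} (h : t ≤ s) :
    μ.expect (fun w : Word s => (min (μ.ratio ν w) l - min (μ.ratio ν (Word.trunc h w)) l) ^ 2) ≤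
      μ.truncPotential ν l s - μ.truncPotential ν l t := by
  set g : (n : ℕ) → Word n → ℝ := fun _ v => min (μ.ratio ν v) l
  rw [truncPotential, truncPotential, ← μ.expect_comp_trunc hA h]
  -- the cross term is nonnegative because the truncated ratios form a supermartingale
  have hcross : 0 ≤ ∑ w : Word s,
      (l - g t (Word.trunc h w)) * (μ.m (cylOf w) * (g t (Word.trunc h w) - g s w)) := by
    rw [sum_eq_sum_fiber h fun v w => (l - g t v) * (μ.m (cylOf w) * (g t v - g s w))]
    refine Finset.sum_nonneg fun v _ => ?_
    rw [← Finset.mul_sum]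
    refine mul_nonneg (sub_nonneg.2 (min_le_right _ _)) ?_
    simp only [mul_sub, Finset.sum_sub_distrib, ← Finset.sum_mul, ← μ.m_cylOf_eq_sum_fiber hA h]
    linarith [sum_fiber_mul_min_ratio_le ν hA hμ h l v]
  simp only [expect, ← Finset.sum_sub_distrib]
  have key : ∀ w : Word s, μ.m (cylOf w) * (g s w - g t (Word.trunc h w)) ^ 2 =
      (μ.m (cylOf w) * (g s w ^ 2 - 2 * l * g s w) - μ.m (cylOf w) *
        (g t (Word.trunc h w) ^ 2 - 2 * l * g t (Word.trunc h w))) -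
      2 * ((l - g t (Word.trunc h w)) * (μ.m (cylOf w) * (g t (Word.trunc h w) - g s w))) :=
    fun w => by ring
  simp only [g] at key hcross ⊢
  rw [Finset.sum_congr rfl fun w _ => key w, Finset.sum_sub_distrib, ← Finset.mul_sum]
  linarith

include hA hμ in
theorem monotone_truncPotential (l : ℝ) : Monotone (μ.truncPotential ν l) := fun t s h => by
  have := μ.expect_mono hA (k := fun _ => 0) fun w => sq_nonneg
    (min (μ.ratio ν w) l - min (μ.ratio ν (Word.trunc h w)) l)
  rw [expect, Finset.sum_eq_zero fun _ _ => mul_zero _] at this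
  linarith [expect_sq_sub_le ν hA hμ (l := l) h]

include hA hμ in
theorem truncPotential_nonpos {l : ℝ} (hl : 0 ≤ l) (t : ℕ) : μ.truncPotential ν l t ≤ 0 := by
  refine Finset.sum_nonpos fun v _ => mul_nonpos_of_nonneg_of_nonpos
    (μ.nonneg _ (hA (cylOf_mem_cylAlgebra v))) ?_
  have h₀ : 0 ≤ min (μ.ratio ν v) l :=
    le_min (div_nonneg (ν.nonneg _ (hA (cylOf_mem_cylAlgebra v))) (hμ t v).le) hl
  nlinarith [min_le_right (μ.ratio ν v) l]

include hA in
theorem expect_abs_ratio_sub_le (l : ℝ) (h : t ≤ s) :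
    μ.expect (fun w : Word s => |μ.ratio ν w - μ.ratio ν (Word.trunc h w)|) ≤
      μ.expect (fun w : Word s => |min (μ.ratio ν w) l - min (μ.ratio ν (Word.trunc h w)) l|) +
        μ.tail ν l s + μ.tail ν l t := by
  rw [tail, tail, ← μ.expect_comp_trunc hA h fun v => max (μ.ratio ν v - l) 0]
  simp only [expect, ← Finset.sum_add_distrib, ← mul_add]
  exact Finset.sum_le_sum fun w _ => mul_le_mul_of_nonneg_left
    (abs_sub_le_abs_min_sub_min_add _ _ l) (μ.nonneg _ (hA (cylOf_mem_cylAlgebra w)))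

include hA hμ in
theorem exists_forall_tail_lt (hνμ : AbsCont μ ν) {α : ℝ} (hα : 0 < α) :
    ∃ l, 0 ≤ l ∧ ∀ t, μ.tail ν l t < α := by
  obtain ⟨δ, hδ, hmod⟩ := hνμ.exists_pos hα
  refine ⟨2 / δ, by positivity, fun t => ?_⟩
  -- by Markov's inequality the cylinders where the ratio is at least `2 / δ` have small
  -- `μ`-mass, and the tail is at most their `ν`-mass
  set H := Finset.univ.filter fun v : Word t => 2 / δ * μ.m (cylOf v) ≤ ν.m (cylOf v)
  have hν₀ (v : Word t) := ν.nonneg _ (hA (cylOf_mem_cylAlgebra v))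
  have hH : μ.m (cylUnion H) < δ := by
    have := Finset.mul_sum_filter_le_sum Finset.univ (fun v : Word t => μ.m (cylOf v))
      (fun v => ν.m (cylOf v)) (2 / δ) fun v _ => hν₀ v
    rw [ν.sum_m_cylOf hA, div_mul_eq_mul_div, div_le_iff₀ hδ] at this
    rw [μ.m_cylUnion hA]
    linarith
  refine lt_of_le_of_lt ?_ (hmod _ (hA (cylUnion_mem_cylAlgebra H)) hH)
  rw [ν.m_cylUnion hA, Finset.sum_filter, tail, expect]
  refine Finset.sum_le_sum fun v _ => ?_
  rw [mul_max_of_nonneg _ _ (hμ t v).le, mul_zero, mul_sub, mul_ratio ν hμ]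
  split_ifs with hv
  · exact max_le (by linarith [mul_nonneg (hμ t v).le (by positivity : (0 : ℝ) ≤ 2 / δ)]) (hν₀ v)
  · exact max_le (by linarith) le_rfl

include hA hμ in
/-- The likelihood ratios form a uniformly integrable martingale, hence are Cauchy in `L¹(μ)`. -/
theorem exists_forall_expect_abs_ratio_sub_lt (hνμ : AbsCont μ ν) {η : ℝ} (hη : 0 < η) :
    ∃ T, ∀ t s (h : t ≤ s), T ≤ t →
      μ.expect (fun w : Word s => |μ.ratio ν w - μ.ratio ν (Word.trunc h w)|) < η := by
  obtain ⟨l, hl, htail⟩ := exists_forall_tail_lt ν hA hμ hνμ (div_pos hη four_pos)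
  have hbdd : BddAbove (range (μ.truncPotential ν l)) := by
    refine ⟨0, ?_⟩
    rintro _ ⟨t, rfl⟩
    exact truncPotential_nonpos ν hA hμ hl t
  obtain ⟨T, hT⟩ := exists_lt_of_lt_ciSup
    (sub_lt_self (⨆ t, μ.truncPotential ν l t) (pow_pos (half_pos hη) 2))
  refine ⟨T, fun t s h hTt => ?_⟩
  have hL2 : μ.expect (fun w : Word s =>
      |min (μ.ratio ν w) l - min (μ.ratio ν (Word.trunc h w)) l|) ^ 2 < (η / 2) ^ 2 := by
    refine (μ.sq_expect_abs_le hA _).trans_lt ((expect_sq_sub_le ν hA hμ h).trans_lt ?_)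
    linarith [le_ciSup hbdd s, monotone_truncPotential ν hA hμ l hTt]
  have hL1 := lt_of_pow_lt_pow_left₀ 2 (half_pos hη).le hL2
  linarith [expect_abs_ratio_sub_le (μ := μ) ν hA l h, htail t, htail s]

include hA in
/-- Conditioning on a cylinder of length `t` only sees the event inside that cylinder, so one
event witnesses every bad cylinder at once. -/
theorem exists_setOf_lt_abs_cond_sub_eq (ε : ℝ) (t : ℕ) :
    ∃ E ∈ A.sets, {ω | ∃ E ∈ A.sets, ε < |μ.cond E (cyl ω t) - ν.cond E (cyl ω t)|} =
      cylUnion (Finset.univ.filter fun v : Word t =>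
        ε < |μ.cond E (cylOf v) - ν.cond E (cylOf v)|) := by
  have hwit (v : Word t) : ∃ E ∈ A.sets,
      (∃ E' ∈ A.sets, ε < |μ.cond E' (cylOf v) - ν.cond E' (cylOf v)|) →
        ε < |μ.cond E (cylOf v) - ν.cond E (cylOf v)| := by
    by_cases h : ∃ E' ∈ A.sets, ε < |μ.cond E' (cylOf v) - ν.cond E' (cylOf v)|
    · obtain ⟨E', hE', h'⟩ := h
      exact ⟨E', hE', fun _ => h'⟩
    · exact ⟨∅, A.empty_mem, fun h' => absurd h' h⟩
  choose E hE hbad using hwit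
  refine ⟨⋃ v ∈ Finset.univ, E v ∩ cylOf v,
    A.biUnion_mem _ fun v _ => A.inter_mem (hE v) (hA (cylOf_mem_cylAlgebra v)), ?_⟩
  have hcond (κ : FA A) (v : Word t) :
      κ.cond (⋃ w ∈ Finset.univ, E w ∩ cylOf w) (cylOf v) = κ.cond (E v) (cylOf v) := by
    rw [← κ.cond_inter_self, ← κ.cond_inter_self (E v)]
    congr 1
    ext ω
    simp only [mem_inter_iff, mem_iUnion, Finset.mem_univ, exists_true_left, mem_cylOf]
    exact ⟨fun ⟨⟨w, hw, hωw⟩, hωv⟩ => ⟨hωv ▸ hωw ▸ hw, hωv⟩, fun ⟨hω, hωv⟩ => ⟨⟨v, hω, hωv⟩, hωv⟩⟩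
  ext ω
  simp only [cyl_eq_cylOf, hcond]
  simp only [mem_ofPred_eq, mem_cylUnion, Finset.mem_filter, Finset.mem_univ, true_and]
  exact ⟨hbad _, fun h => ⟨_, hE _, h⟩⟩

include hA hμ in
theorem sum_abs_cond_sub_cond_mul_le (h : t ≤ s) (W : Finset (Word s)) :
    ∑ v : Word t, |μ.cond (cylUnion W) (cylOf v) - ν.cond (cylUnion W) (cylOf v)| *
      ν.m (cylOf v) ≤ μ.expect (fun w : Word s => |μ.ratio ν w - μ.ratio ν (Word.trunc h w)|) := by
  rw [expect, sum_eq_sum_fiber h fun v w => μ.m (cylOf w) * |μ.ratio ν w - μ.ratio ν v|]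
  refine Finset.sum_le_sum fun v _ => ?_
  have hμ₀ (w : Word s) := μ.nonneg _ (hA (cylOf_mem_cylAlgebra w))
  have hrhs : 0 ≤ ∑ w ∈ fiber h v, μ.m (cylOf w) * |μ.ratio ν w - μ.ratio ν v| :=
    Finset.sum_nonneg fun w _ => mul_nonneg (hμ₀ w) (abs_nonneg _)
  rcases (ν.nonneg _ (hA (cylOf_mem_cylAlgebra v))).eq_or_lt with h0 | hνv
  · rwa [← h0, mul_zero]
  have key : |μ.cond (cylUnion W) (cylOf v) - ν.cond (cylUnion W) (cylOf v)| * ν.m (cylOf v) =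
      |∑ w ∈ fiber h v ∩ W, μ.m (cylOf w) * (μ.ratio ν v - μ.ratio ν w)| := by
    rw [← abs_of_pos hνv, ← abs_mul, cond, cond, sub_mul,
      div_mul_cancel₀ _ hνv.ne', cylUnion_inter_cylOf h, μ.m_cylUnion hA, ν.m_cylUnion hA,
      div_mul_eq_mul_div, mul_div_assoc]
    simp only [mul_sub, Finset.sum_sub_distrib, ← Finset.sum_mul, mul_ratio ν hμ]
    rfl
  rw [key]
  refine (Finset.abs_sum_le_sum_abs _ _).trans ((Finset.sum_le_sum fun w _ => ?_).trans
    (Finset.sum_le_sum_of_subset_of_nonneg Finset.inter_subset_left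
      fun w _ _ => mul_nonneg (hμ₀ w) (abs_nonneg _)))
  rw [abs_mul, abs_of_nonneg (hμ₀ w), abs_sub_comm]

include hA hμ in
theorem mul_m_cylUnion_filter_le_expect (h : t ≤ s) (W : Finset (Word s)) (c : ℝ) :
    c * ν.m (cylUnion (Finset.univ.filter fun v : Word t => c * ν.m (cylOf v) ≤
      |μ.cond (cylUnion W) (cylOf v) - ν.cond (cylUnion W) (cylOf v)| * ν.m (cylOf v))) ≤
      μ.expect (fun w : Word s => |μ.ratio ν w - μ.ratio ν (Word.trunc h w)|) := by
  rw [ν.m_cylUnion hA]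
  exact (Finset.mul_sum_filter_le_sum _ _ _ c fun v _ => mul_nonneg (abs_nonneg _)
    (ν.nonneg _ (hA (cylOf_mem_cylAlgebra v)))).trans (sum_abs_cond_sub_cond_mul_le ν hA hμ h W)

include hA hμ in
theorem filter_lt_abs_cond_sub_subset {E F : Set BinSeq} (hE : E ∈ A.sets) (hF : F ∈ A.sets)
    (t : ℕ) (c : ℝ) :
    (Finset.univ.filter fun v : Word t => 3 * c < |μ.cond E (cylOf v) - ν.cond E (cylOf v)|) ⊆
      (Finset.univ.filter fun v => c * μ.m (cylOf v) ≤ μ.m (symmDiff E F ∩ cylOf v)) ∪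
      (Finset.univ.filter fun v => c * ν.m (cylOf v) ≤ ν.m (symmDiff E F ∩ cylOf v)) ∪
      (Finset.univ.filter fun v =>
        c * ν.m (cylOf v) ≤ |μ.cond F (cylOf v) - ν.cond F (cylOf v)| * ν.m (cylOf v)) := by
  intro v hv
  by_contra hnot
  simp only [Finset.mem_union, Finset.mem_filter, Finset.mem_univ, true_and, not_or,
    not_le] at hv hnot
  exact (abs_cond_sub_cond_lt hE hF (hA (cylOf_mem_cylAlgebra v)) (hμ t v) hnot.1.1 hnot.1.2
    hnot.2).not_gt hv

end LikelihoodRatio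

/-- Up to a `μ`-small set, an event is a finite union of cylinders `F`, about which `μ` and `ν`
eventually agree by the `L¹` convergence of the likelihood ratios. The cylinders where this
approximation fails for `μ` or `ν` carry little `ν`-mass by Markov's inequality. -/
theorem bdProp_of_approxBy (μ : FA A) (hA : cylAlgebra.sets ⊆ A.sets)
    (hμ : ∀ t (v : Word t), 0 < μ.m (cylOf v)) (happrox : μ.ApproxBy cylAlgebra.sets) :
    BDProp μ := by
  intro ν hνμ ε hε
  rw [Metric.tendsto_atTop]
  intro α hα
  obtain ⟨c, hc, rfl⟩ : ∃ c, 0 < c ∧ ε = 3 * c := ⟨ε / 3, by positivity, by ring⟩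
  have hα₃ : 0 < α / 3 := by positivity
  obtain ⟨δ₁, hδ₁, h₁⟩ := hνμ.exists_pos hα₃
  obtain ⟨δ₂, hδ₂, h₂⟩ := hνμ.exists_pos (mul_pos hc hα₃)
  obtain ⟨T, hT⟩ := exists_forall_expect_abs_ratio_sub_lt ν hA hμ hνμ (mul_pos hc hα₃)
  refine ⟨T, fun t ht => ?_⟩
  obtain ⟨E, hE, hbad⟩ := exists_setOf_lt_abs_cond_sub_eq (μ := μ) ν hA (3 * c) t
  obtain ⟨_, hF, hEF⟩ := happrox E hE _ (lt_min (mul_pos hc hδ₁) hδ₂)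
  obtain ⟨s, hts, W, rfl⟩ := exists_le_cylUnion_eq hF t
  have hR := A.symmDiff_mem hE (hA hF)
  have hCU (G : Finset (Word t)) := hA (cylUnion_mem_cylAlgebra G)
  have hcover := filter_lt_abs_cond_sub_subset ν hA hμ hE (hA hF) t c
  set G₁ := Finset.univ.filter fun v : Word t =>
    c * μ.m (cylOf v) ≤ μ.m (symmDiff E (cylUnion W) ∩ cylOf v)
  set G₂ := Finset.univ.filter fun v : Word t =>
    c * ν.m (cylOf v) ≤ ν.m (symmDiff E (cylUnion W) ∩ cylOf v)
  set G₃ := Finset.univ.filter fun v : Word t => c * ν.m (cylOf v) ≤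
    |μ.cond (cylUnion W) (cylOf v) - ν.cond (cylUnion W) (cylOf v)| * ν.m (cylOf v)
  have hG₁ : ν.m (cylUnion G₁) < α / 3 := h₁ _ (hCU G₁) (lt_of_mul_lt_mul_left
    ((μ.mul_m_cylUnion_filter_le hA hR c).trans_lt (hEF.trans_le (min_le_left _ _))) hc.le)
  have hG₂ : ν.m (cylUnion G₂) < α / 3 := lt_of_mul_lt_mul_left
    ((ν.mul_m_cylUnion_filter_le hA hR c).trans_lt
      (h₂ _ hR (hEF.trans_le (min_le_right _ _)))) hc.le
  have hG₃ : ν.m (cylUnion G₃) < α / 3 := lt_of_mul_lt_mul_left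
    ((mul_m_cylUnion_filter_le_expect ν hA hμ hts W c).trans_lt (hT t s hts ht)) hc.le
  rw [hbad, Real.dist_eq, sub_zero, abs_of_nonneg (ν.nonneg _ (hCU _))]
  have hmono := ν.m_mono (hCU _) (hCU _) (preimage_mono (Finset.coe_subset.2 hcover))
  rw [cylUnion_union, cylUnion_union] at hmono
  have := ν.m_union_le (A.union_mem _ (hCU G₁) _ (hCU G₂)) (hCU G₃)
  have := ν.m_union_le (hCU G₁) (hCU G₂)
  linarith

end FA

/-! ### Disjoint dense sets of null points -/

theorem MeasureTheory.Measure.exists_measure_singleton_eq_zero {Ω β : Type*} [MeasurableSpace Ω]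
    [MeasurableSingletonClass Ω] (P : Measure Ω) [IsFiniteMeasure P] [Uncountable β] {f : β → Ω}
    (hf : Function.Injective f) : ∃ b, P {f b} = 0 := by
  by_contra! h
  have hatoms := Measure.countable_meas_level_set_pos (μ := P) measurable_id
  have : (univ : Set β).Countable := MapsTo.countable_of_injOn
    (fun b _ => (pos_iff_ne_zero.2 (h b) : 0 < P {f b})) hf.injOn hatoms
  exact not_countable_univ this

theorem FA.not_countablyAdditive_of_countable {Ω : Type*} {A : SetAlgebra Ω} (μ : FA A)
    {D : Set Ω} (hD : D.Countable) (hsing : ∀ x ∈ D, {x} ∈ A.sets) (hμD : μ.m D = 1)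
    (hμx : ∀ x ∈ D, μ.m {x} = 0) : ¬ CountablyAdditive μ := by
  intro hCA
  have hne : D.Nonempty := nonempty_iff_ne_empty.2 fun h => by
    rw [h, μ.m_empty] at hμD
    exact zero_ne_one hμD
  obtain ⟨e, rfl⟩ := hD.exists_eq_range hne
  set E := disjointed fun n => ({e n} : Set Ω)
  have hEsub (n : ℕ) : E n ⊆ {e n} := disjointed_subset _ n
  have hEA (n : ℕ) : E n ∈ A.sets := (subset_singleton_iff_eq.1 (hEsub n)).elim
    (fun h => h ▸ A.empty_mem) (fun h => h ▸ hsing _ ⟨n, rfl⟩)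
  have hE0 (n : ℕ) : μ.m (E n) = 0 := le_antisymm
    (hμx _ ⟨n, rfl⟩ ▸ μ.m_mono (hEA n) (hsing _ ⟨n, rfl⟩) (hEsub n)) (μ.nonneg _ (hEA n))
  have := hCA E hEA fun n m hnm => disjoint_disjointed _ hnm
  simp only [hE0, Finset.sum_const_zero, E, iUnion_disjointed, iUnion_singleton_eq_range,
    hμD] at this
  exact zero_ne_one (tendsto_nhds_unique tendsto_const_nhds this)

namespace BinSeq

instance : Uncountable BinSeq :=
  Cardinal.aleph0_lt_mk_iff.1 (by simp [Cardinal.aleph0_lt_continuum])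

variable {t : ℕ}

/-- The bits of `r` sit at all positions `2 * pair i j` with `j ≥ t`, so `r` can be read off
from the sequence; the free bits `z` at the odd positions make `code r v` injective. -/
def code (r : BinSeq) (v : Word t) (z : BinSeq) : BinSeq := fun n =>
  if h : n < t then v ⟨n, h⟩ else if n % 2 = 0 then r (Nat.unpair (n / 2)).1 else z (n / 2 - t)

theorem take_code (r : BinSeq) (v : Word t) (z : BinSeq) : take t (code r v z) = v :=
  funext fun i => dif_pos i.isLt

theorem code_injective (r : BinSeq) (v : Word t) : Function.Injective (code r v) :=
  fun z z' h => funext fun k => by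
    have := congrFun h (2 * (k + t) + 1)
    simpa [code, show ¬ 2 * (k + t) + 1 < t by omega, show (2 * (k + t) + 1) / 2 - t = k by omega]
      using this

theorem code_two_mul_pair (r : BinSeq) (v : Word t) (z : BinSeq) {i j : ℕ} (hj : t ≤ j) :
    code r v z (2 * Nat.pair i j) = r i := by
  have := Nat.right_le_pair i j
  simp [code, show ¬ 2 * Nat.pair i j < t by omega]

theorem eq_of_code_eq {r r' : BinSeq} {t' : ℕ} {v : Word t} {v' : Word t'} {z z' : BinSeq}
    (h : code r v z = code r' v' z') : r = r' := funext fun i => by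
  have := congrFun h (2 * Nat.pair i (max t t'))
  rwa [code_two_mul_pair _ _ _ (le_max_left t t'), code_two_mul_pair _ _ _ (le_max_right t t')]
    at this

variable (P : Measure BinSeq) [IsFiniteMeasure P]

noncomputable def denseSet (r : BinSeq) : Set BinSeq :=
  range fun p : Σ t, Word t =>
    code r p.2 (P.exists_measure_singleton_eq_zero (code_injective r p.2)).choose

theorem denseSet_countable (r : BinSeq) : (denseSet P r).Countable := countable_range _

theorem measure_singleton_of_mem_denseSet {r x : BinSeq} (hx : x ∈ denseSet P r) : P {x} = 0 := by
  obtain ⟨⟨t, v⟩, rfl⟩ := hx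
  exact (P.exists_measure_singleton_eq_zero (code_injective r v)).choose_spec

theorem inter_denseSet_nonempty (r : BinSeq) {S : Set BinSeq} (hS : S ∈ cylAlgebra.sets)
    (hne : S.Nonempty) : (S ∩ denseSet P r).Nonempty := by
  obtain ⟨t, W, rfl⟩ := hS
  obtain ⟨ω, hω⟩ := hne
  exact ⟨_, by rw [mem_cylUnion, take_code]; exact hω, ⟨t, take t ω⟩, rfl⟩

theorem disjoint_denseSet {r r' : BinSeq} (h : r ≠ r') :
    Disjoint (denseSet P r) (denseSet P r') := by
  refine disjoint_left.2 ?_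
  rintro _ ⟨_, rfl⟩ ⟨_, he⟩
  exact h (eq_of_code_eq he.symm)

end BinSeq

theorem exists_bdProp_not_countablyAdditive {A : SetAlgebra BinSeq}
    (hA : cylAlgebra.sets ⊆ A.sets) (hsing : ∀ x, {x} ∈ A.sets) (P : Measure BinSeq)
    [IsProbabilityMeasure P] (hpos : ∀ t (v : Word t), 0 < P (cylOf v)) {D : Set BinSeq}
    (hD : D.Countable) (hDP : ∀ x ∈ D, P {x} = 0)
    (hDcyl : ∀ S ∈ cylAlgebra.sets, S.Nonempty → (S ∩ D).Nonempty) :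
    ∃ Q : FA A, (∀ S ∈ cylAlgebra.sets, Q.m S = (P S).toReal) ∧ Q.m D = 1 ∧ BDProp Q ∧
      ¬ CountablyAdditive Q := by
  obtain ⟨μ, hμP, hμD, happrox⟩ :=
    (P.toFA cylAlgebra fun _ => measurableSet_of_mem_cylAlgebra).exists_extension_mass_one hDcyl
  let Q : FA A := μ.restrict (subset_univ _)
  refine ⟨Q, hμP, hμD, Q.bdProp_of_approxBy hA (fun t v => ?_) (happrox.restrict _),
    Q.not_countablyAdditive_of_countable hD (fun x _ => hsing x) hμD fun x hx =>
      Q.m_singleton_eq_zero hA hμP (hsing x) (hDP x hx)⟩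
  rw [show Q.m (cylOf v) = _ from hμP _ (cylOf_mem_cylAlgebra v)]
  exact ENNReal.toReal_pos (hpos t v).ne' (measure_ne_top P _)

open MeasureTheory in
theorem continuum_many_nonSigmaAdditive_BD_general
    (A : SetAlgebra BinSeq)
    (hborel : ∀ S : Set BinSeq, MeasurableSet S → S ∈ A.sets)
    (P : Measure BinSeq) [IsProbabilityMeasure P]
    (hpos : ∀ (ω : BinSeq) (t : ℕ), 0 < P (cyl ω t)) :
    Cardinal.continuum ≤ Cardinal.mk
      {Q : FA A // (∀ (ω : BinSeq) (t : ℕ), Q.m (cyl ω t) = (P (cyl ω t)).toReal) ∧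
        BDProp Q ∧ ¬ CountablyAdditive Q} := by
  have hA : cylAlgebra.sets ⊆ A.sets := fun S hS => hborel S (measurableSet_of_mem_cylAlgebra hS)
  have hpos' (t : ℕ) (v : Word t) : 0 < P (cylOf v) := by
    obtain ⟨ω, rfl⟩ := take_surjective t v
    exact cyl_eq_cylOf ω t ▸ hpos ω t
  choose Q hQP hQD hBD hCA using fun r => exists_bdProp_not_countablyAdditive hA
    (fun x => hborel _ (measurableSet_singleton x)) P hpos' (denseSet_countable P r)
    (fun _ => measure_singleton_of_mem_denseSet P) fun _ => inter_denseSet_nonempty P r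
  have hD (r : BinSeq) : denseSet P r ∈ A.sets := hborel _ (denseSet_countable P r).measurableSet
  refine (show Cardinal.continuum ≤ Cardinal.mk BinSeq by simp).trans
    (Cardinal.mk_le_of_injective (f := fun r => ⟨Q r, fun ω t => ?_, hBD r, hCA r⟩)
      fun r r' h => ?_)
  · exact cyl_eq_cylOf ω t ▸ hQP r _ (cylOf_mem_cylAlgebra _)
  · by_contra hne
    have := (Q r').m_eq_zero_of_disjoint (hD r) (hD r') (disjoint_denseSet P hne) (hQD r')
    rw [← congrArg (fun Q => Q.1.m (denseSet P r)) h, hQD r] at this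
    exact one_ne_zero this

open MeasureTheory in
/-- Theorem 10: for every σ-additive probability `P` on the Borel
σ-algebra of `{0,1}^∞` that is positive on cylinders, there are at least continuum many
finitely additive probabilities agreeing with `P` on every cylinder, satisfying the
Blackwell–Dubins property, and failing σ-additivity. -/
theorem continuum_many_nonSigmaAdditive_BD
    (A : SetAlgebra BinSeq) (hσ : A.IsSigmaAlgebra)
    (hborel : ∀ S : Set BinSeq, MeasurableSet S → S ∈ A.sets)
    (P : Measure BinSeq) [IsProbabilityMeasure P]
    (hpos : ∀ (ω : BinSeq) (t : ℕ), 0 < P (cyl ω t)) :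
    Cardinal.continuum ≤ Cardinal.mk
      {Q : FA A // (∀ (ω : BinSeq) (t : ℕ), Q.m (cyl ω t) = (P (cyl ω t)).toReal) ∧
        BDProp Q ∧ ¬ CountablyAdditive Q} :=
  continuum_many_nonSigmaAdditive_BD_general A hborel P hpos
end

section
/- Let X be a countable set with the discrete topology, Ω = X^∞, and let P be a conditional opinion (a strongly nonatomic finitely additive conditional probability system) on Ω satisfying the Blackwell–Dubins property. Then for every path ω ∈ Ω, lim_{t→∞} P(ω^t) = 0. -/
open Filter Topology


/-- A (finitely additive) conditional probability system on `Ω = X^∞` in the sense of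
Berti–Regazzini–Rigo: `p E C` is `P(E | C)` where `C` ranges over cylinders.
(1) each `p (· | ωᵗ)` is a finitely additive probability; (2) `p (ωᵗ | ωᵗ) = 1`;
(3) `p (E ∩ ω^{t+n} | ωᵗ) = p (E | ω^{t+n}) · p (ω^{t+n} | ωᵗ)`. -/
structure CondProb (X : Type*) (A : SetAlgebra (ℕ → X)) where
  p : Set (ℕ → X) → Set (ℕ → X) → ℝ
  nonneg : ∀ E C, 0 ≤ p E C
  total : ∀ (ω : ℕ → X) (t : ℕ), p Set.univ (cyl ω t) = 1
  add : ∀ (ω : ℕ → X) (t : ℕ), ∀ E ∈ A.sets, ∀ F ∈ A.sets, Disjoint E F →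
    p (E ∪ F) (cyl ω t) = p E (cyl ω t) + p F (cyl ω t)
  cond_self : ∀ (ω : ℕ → X) (t : ℕ), p (cyl ω t) (cyl ω t) = 1
  chain : ∀ (ω : ℕ → X) (t n : ℕ), ∀ E ∈ A.sets,
    p (E ∩ cyl ω (t + n)) (cyl ω t) = p E (cyl ω (t + n)) * p (cyl ω (t + n)) (cyl ω t)

/-- The Blackwell–Dubins property for a conditional probability `P`: for every finitely
additive probability `Q ≪ P(·|Ω)` there is a conditional probability `Q̃` with
`Q̃(·|Ω) = Q` such that `P` merges with `Q̃`. -/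
def CondBD {X : Type*} (A : SetAlgebra (ℕ → X)) (P : CondProb X A) : Prop :=
  ∀ Q : FA A,
    (∀ E : ℕ → Set (ℕ → X), (∀ n, E n ∈ A.sets) →
      Tendsto (fun n => P.p (E n) Set.univ) atTop (𝓝 0) →
      Tendsto (fun n => Q.m (E n)) atTop (𝓝 0)) →
    ∃ Qt : CondProb X A, (∀ E ∈ A.sets, Qt.p E Set.univ = Q.m E) ∧
      ∀ ε > (0:ℝ), Tendsto
        (fun t => Q.m {ω | ∃ E ∈ A.sets, ε < |P.p E (cyl ω t) - Qt.p E (cyl ω t)|})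
        atTop (𝓝 0)

section Aux

variable {X : Type*}

lemma cyl_zero (ω : ℕ → X) : cyl ω 0 = Set.univ := by
  ext ω'; simp [cyl]

lemma mem_cyl_self (ω : ℕ → X) (t : ℕ) : ω ∈ cyl ω t := fun _ _ => rfl

lemma cyl_anti (ω : ℕ → X) {s t : ℕ} (h : s ≤ t) : cyl ω t ⊆ cyl ω s :=
  fun _ hω' i hi => hω' i (lt_of_lt_of_le hi h)

lemma cyl_eq_of_mem {ω ω' : ℕ → X} {t : ℕ} (h : ω' ∈ cyl ω t) : cyl ω' t = cyl ω t := by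
  ext ω''
  constructor <;> intro h2 i hi
  · rw [h2 i hi, h i hi]
  · rw [h2 i hi, ← h i hi]

lemma isOpen_cyl [TopologicalSpace X] [DiscreteTopology X] (ω : ℕ → X) (t : ℕ) :
    IsOpen (cyl ω t) := by
  have h : cyl ω t = ⋂ i ∈ Finset.range t, (fun ω' : ℕ → X => ω' i) ⁻¹' {ω i} := by
    ext ω'; simp [cyl]
  rw [h]
  exact isOpen_biInter_finset fun i _ =>
    (continuous_apply i).isOpen_preimage _ (isOpen_discrete _)

lemma SetAlgebra.inter_mem_s17 {Ω : Type*} (A : SetAlgebra Ω) {S T : Set Ω}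
    (hS : S ∈ A.sets) (hT : T ∈ A.sets) : S ∩ T ∈ A.sets := by
  have h := A.compl_mem _ (A.union_mem _ (A.compl_mem _ hS) _ (A.compl_mem _ hT))
  rwa [Set.compl_union, compl_compl, compl_compl] at h

lemma FA.diff_eq {Ω : Type*} {A : SetAlgebra Ω} (P : FA A) {S T : Set Ω}
    (hS : S ∈ A.sets) (hT : T ∈ A.sets) (hST : S ⊆ T) :
    P.m (T ∩ Sᶜ) = P.m T - P.m S := by
  have h1 : T = S ∪ (T ∩ Sᶜ) := by
    ext x
    constructor
    · intro hx
      by_cases hxS : x ∈ S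
      · exact Or.inl hxS
      · exact Or.inr ⟨hx, hxS⟩
    · rintro (hx | ⟨hx, _⟩)
      exacts [hST hx, hx]
  have h2 := P.add S hS (T ∩ Sᶜ) (A.inter_mem_s17 hT (A.compl_mem _ hS))
    (by rw [Set.disjoint_left]; rintro a ha ⟨_, ha2⟩; exact ha2 ha)
  rw [← h1] at h2
  linarith

lemma FA.mono {Ω : Type*} {A : SetAlgebra Ω} (P : FA A) {S T : Set Ω}
    (hS : S ∈ A.sets) (hT : T ∈ A.sets) (hST : S ⊆ T) : P.m S ≤ P.m T := by
  have h := P.diff_eq hS hT hST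
  have h2 := P.nonneg _ (A.inter_mem_s17 hT (A.compl_mem _ hS))
  linarith

end Aux
/-- for a countable discrete outcome space `X`, every conditional opinion
on `X^∞` with the Blackwell–Dubins property assigns vanishing probability to the
cylinders along every path: `P(ωᵗ) → 0`. -/
theorem condBD_implies_cylinder_prob_vanishes
    (X : Type*) [Countable X] [Nonempty X] [TopologicalSpace X] [DiscreteTopology X]
    (A : SetAlgebra (ℕ → X)) (hσ : A.IsSigmaAlgebra)
    (hopen : ∀ U : Set (ℕ → X), IsOpen U → U ∈ A.sets)
    (P : CondProb X A)
    (hna : ∀ E ∈ A.sets, ∀ α : ℝ, 0 ≤ α → α ≤ 1 →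
      ∃ F ∈ A.sets, F ⊆ E ∧ P.p F Set.univ = α * P.p E Set.univ)
    (hbd : CondBD A P) :
    ∀ ω : ℕ → X, Tendsto (fun t => P.p (cyl ω t) Set.univ) atTop (𝓝 0) := by
  intro ω
  have cylmem : ∀ t, cyl ω t ∈ A.sets := fun t => hopen _ (isOpen_cyl ω t)
  set Pfa : FA A :=
    { m := fun E => P.p E Set.univ
      nonneg := fun S _ => P.nonneg S Set.univ
      total := by have h := P.total ω 0; rwa [cyl_zero] at h
      add := fun S hS T hT hd => by
        have h := P.add ω 0 S hS T hT hd; rwa [cyl_zero] at h } with hPfa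
  have hPm : ∀ E, Pfa.m E = P.p E Set.univ := fun _ => rfl
  set a : ℕ → ℝ := fun t => P.p (cyl ω t) Set.univ with ha
  have hanti : Antitone a := fun s t h =>
    Pfa.mono (cylmem t) (cylmem s) (cyl_anti ω h)
  have hnn : ∀ t, 0 ≤ a t := fun t => P.nonneg _ _
  have hbdd : BddBelow (Set.range a) := ⟨0, by rintro x ⟨t, rfl⟩; exact hnn t⟩
  set δ : ℝ := ⨅ t, a t with hδ
  have hlim : Tendsto a atTop (𝓝 δ) := tendsto_atTop_ciInf hanti hbdd
  have hδ0 : 0 ≤ δ := le_ciInf hnn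
  rcases eq_or_lt_of_le hδ0 with hδz | hδpos
  · rwa [← hδz] at hlim
  exfalso
  have hδle : ∀ t, δ ≤ a t := fun t => ciInf_le hbdd t
  obtain ⟨T, hT⟩ := (hlim.eventually (gt_mem_nhds (show δ < 5 * δ / 4 by linarith))).exists
  obtain ⟨F, hF, hFsub, hFm⟩ := hna (cyl ω T) (cylmem T) (1/2) (by norm_num) (by norm_num)
  have hmF : Pfa.m F = a T / 2 := by rw [hPm, hFm]; ring
  have hmFpos : 0 < Pfa.m F := by rw [hmF]; linarith [hδle T]
  set Q : FA A :=
    { m := fun S => Pfa.m (S ∩ F) / Pfa.m F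
      nonneg := fun S _ => div_nonneg (P.nonneg _ _) hmFpos.le
      total := by simp only [Set.univ_inter]; exact div_self hmFpos.ne'
      add := fun S hS T' hT' hd => by
        have heq : (S ∪ T') ∩ F = (S ∩ F) ∪ (T' ∩ F) := Set.union_inter_distrib_right ..
        have hadd := Pfa.add (S ∩ F) (A.inter_mem_s17 hS hF) (T' ∩ F) (A.inter_mem_s17 hT' hF)
          (hd.mono Set.inter_subset_left Set.inter_subset_left)
        show Pfa.m ((S ∪ T') ∩ F) / Pfa.m F = _
        rw [heq, hadd]; ring } with hQdef
  have hQm : ∀ S, Q.m S = Pfa.m (S ∩ F) / Pfa.m F := fun _ => rfl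
  obtain ⟨Qt, hagree, hmerge⟩ := hbd Q (by
    intro E hE h0
    refine squeeze_zero (fun n => Q.nonneg _ (hE n)) (fun n => ?_)
      (by simpa using h0.div_const (Pfa.m F))
    rw [hQm]
    exact (div_le_div_iff_of_pos_right hmFpos).mpr
      (Pfa.mono (A.inter_mem_s17 (hE n) hF) (hE n) Set.inter_subset_left))
  have hkey : ∀ t, T ≤ t → (1:ℝ)/2 ≤ Q.m {ω' | ∃ E ∈ A.sets,
      (1:ℝ)/3 < |P.p E (cyl ω' t) - Qt.p E (cyl ω' t)|} := by
    intro t htT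
    have hat : δ ≤ a t := hδle t
    have hatpos : 0 < a t := lt_of_lt_of_le hδpos hat
    have hd1 : Pfa.m (F ∩ (F ∩ cyl ω t)ᶜ) = Pfa.m F - Pfa.m (F ∩ cyl ω t) :=
      Pfa.diff_eq (A.inter_mem_s17 hF (cylmem t)) hF Set.inter_subset_left
    have hsetid : F ∩ (F ∩ cyl ω t)ᶜ = F ∩ (cyl ω t)ᶜ := by
      ext x
      simp only [Set.mem_inter_iff, Set.mem_compl_iff, not_and]
      tauto
    rw [hsetid] at hd1
    have hd2 : Pfa.m (cyl ω T ∩ (cyl ω t)ᶜ) = a T - a t :=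
      Pfa.diff_eq (cylmem t) (cylmem T) (cyl_anti ω htT)
    have hmono2 : Pfa.m (F ∩ (cyl ω t)ᶜ) ≤ Pfa.m (cyl ω T ∩ (cyl ω t)ᶜ) :=
      Pfa.mono (A.inter_mem_s17 hF (A.compl_mem _ (cylmem t)))
        (A.inter_mem_s17 (cylmem T) (A.compl_mem _ (cylmem t)))
        (Set.inter_subset_inter_left _ hFsub)
    have hub : Pfa.m (F ∩ cyl ω t) ≤ Pfa.m F :=
      Pfa.mono (A.inter_mem_s17 hF (cylmem t)) hF Set.inter_subset_left
    have hlb : Pfa.m F - (a T - a t) ≤ Pfa.m (F ∩ cyl ω t) := by linarith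
    have hcap_pos : 0 < Pfa.m (F ∩ cyl ω t) := by
      have hmF' := hmF
      linarith [hT]
    have hch := P.chain ω 0 t F hF
    simp only [zero_add, cyl_zero] at hch
    have hchm : Pfa.m (F ∩ cyl ω t) = P.p F (cyl ω t) * a t := hch
    have hPle : P.p F (cyl ω t) ≤ 5/8 := by
      have h1 : P.p F (cyl ω t) * a t ≤ 5/8 * a t := by
        rw [← hchm]
        linarith [hub, hmF, hT, hat]
      exact le_of_mul_le_mul_right h1 hatpos
    have hqch := Qt.chain ω 0 t F hF
    simp only [zero_add, cyl_zero] at hqch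
    rw [hagree _ (A.inter_mem_s17 hF (cylmem t)), hagree _ (cylmem t)] at hqch
    have he1 : Q.m (F ∩ cyl ω t) = Q.m (cyl ω t) := by
      rw [hQm, hQm]
      have hid2 : (F ∩ cyl ω t) ∩ F = cyl ω t ∩ F := by
        ext x
        simp only [Set.mem_inter_iff]
        tauto
      rw [hid2]
    have hQcylpos : 0 < Q.m (cyl ω t) := by
      rw [hQm]
      apply div_pos _ hmFpos
      rw [Set.inter_comm]
      exact hcap_pos
    have hQt1 : Qt.p F (cyl ω t) = 1 := by
      have h2 : Qt.p F (cyl ω t) * Q.m (cyl ω t) = 1 * Q.m (cyl ω t) := by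
        rw [one_mul, ← hqch, he1]
      exact mul_right_cancel₀ hQcylpos.ne' h2
    have hsubB : cyl ω t ⊆ {ω' | ∃ E ∈ A.sets,
        (1:ℝ)/3 < |P.p E (cyl ω' t) - Qt.p E (cyl ω' t)|} := by
      intro ω' hω'
      refine ⟨F, hF, ?_⟩
      rw [cyl_eq_of_mem hω', hQt1]
      have h0F : 0 ≤ P.p F (cyl ω t) := P.nonneg _ _
      rw [abs_of_nonpos (by linarith)]
      linarith
    have hBopen : IsOpen {ω' | ∃ E ∈ A.sets,
        (1:ℝ)/3 < |P.p E (cyl ω' t) - Qt.p E (cyl ω' t)|} := by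
      rw [isOpen_iff_forall_mem_open]
      rintro ω' ⟨E, hE, hE2⟩
      exact ⟨cyl ω' t, fun ω'' h'' => ⟨E, hE, by rwa [cyl_eq_of_mem h'']⟩,
        isOpen_cyl ω' t, mem_cyl_self ω' t⟩
    have hQcyl : (1:ℝ)/2 ≤ Q.m (cyl ω t) := by
      rw [hQm, le_div_iff₀ hmFpos, Set.inter_comm]
      linarith
    exact hQcyl.trans (Q.mono (cylmem t) (hopen _ hBopen) hsubB)
  have hto := hmerge (1/3) (by norm_num)
  have hev2 := hto.eventually (gt_mem_nhds (show (0:ℝ) < 1/2 by norm_num))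
  obtain ⟨t, h1, h2⟩ := (hev2.and (eventually_ge_atTop T)).exists
  linarith [hkey t h2]
end
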